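/- Let all variables be discrete and suppose ĥ satisfies E[Y | Z, A, X] = E[ĥ(W,A,X) | Z, A, X] a.s. and p̂(A=a|x) = p(a|x), p̂(A=a'|x) = p(a'|x) for all x. Then for arbitrary q̂_a and arbitrary p̂(w|a,x) defining η̂₁(x,a',a) := Σ_w ĥ(w,a',x)·p̂(w|a,x), E[ I(A=a')/p(A=a'|X)·q̂_a(Z,A,X)·(Y − ĥ(W,A,X)) + I(A=a)/p(A=a|X)·(ĥ(W,a',X) − η̂₁(X,a',a)) + η̂₁(X,a',a) ] = E[ I(A=a)/p(A=a|X)·ĥ(W,a',X) ]. -/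

import Mathlib

/-! The left-hand integrand minus the right-hand one is the sum of two terms.
The first is a function of `(Z, A, X)` times the residual `Y - ĥ(W, A, X)`, whose conditional
mean given `(Z, A, X)` vanishes by the bridge equation. The second is `η̂₁(X) (1 - I(A = a) / p(a | X))`,
whose conditional mean given `X` vanishes because `E[I(A = a) | X] = p(a | X) > 0`. An expectation
whose conditional means on all fibres of positive probability vanish is zero, the null fibres
carrying no mass. -/

open Finset
open scoped Classical

noncomputable section

/-- Probability of an event under weights `mu`. -/
def pr {O : Type} [Fintype O] (mu : O -> Real) (s : O -> Prop) : Real :=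
  Finset.univ.sum (fun w => if s w then mu w else 0)

/-- Conditional probability `P(s | t)`. -/
def cpr {O : Type} [Fintype O] (mu : O -> Real) (s t : O -> Prop) : Real :=
  pr mu (fun w => s w /\ t w) / pr mu t

/-- Expectation of `f`. -/
def expec {O : Type} [Fintype O] (mu : O -> Real) (f : O -> Real) : Real :=
  Finset.univ.sum (fun w => f w * mu w)

/-- Conditional expectation `E[f | t]`. -/
def cexp {O : Type} [Fintype O] (mu : O -> Real) (f : O -> Real) (t : O -> Prop) : Real :=
  (Finset.univ.sum (fun w => if t w then f w * mu w else 0)) / pr mu t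

section WeightedSums

variable {O : Type} [Fintype O] {mu : O → ℝ}

lemma pr_eq_sum_filter (s : O → Prop) : pr mu s = ∑ o with s o, mu o :=
  (sum_filter s mu).symm

lemma cexp_eq_sum_filter_div (f : O → ℝ) (t : O → Prop) :
    cexp mu f t = (∑ o with t o, f o * mu o) / pr mu t := by
  rw [cexp, sum_filter]

lemma pr_nonneg (hmu0 : ∀ o, 0 ≤ mu o) (s : O → Prop) : 0 ≤ pr mu s := by
  rw [pr_eq_sum_filter]
  exact sum_nonneg fun o _ => hmu0 o

lemma sum_filter_mul_eq_zero_of_pr_eq_zero (hmu0 : ∀ o, 0 ≤ mu o) {t : O → Prop}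
    (ht : pr mu t = 0) (f : O → ℝ) : ∑ o with t o, f o * mu o = 0 := by
  rw [pr_eq_sum_filter, sum_eq_zero_iff_of_nonneg fun o _ => hmu0 o] at ht
  exact sum_eq_zero fun o ho => by rw [ht o ho, mul_zero]

lemma sum_filter_eq_of_cexp_eq {f f' : O → ℝ} {t : O → Prop} (ht : pr mu t ≠ 0)
    (h : cexp mu f t = cexp mu f' t) :
    ∑ o with t o, f o * mu o = ∑ o with t o, f' o * mu o := by
  rwa [cexp_eq_sum_filter_div, cexp_eq_sum_filter_div, div_left_inj' ht] at h

lemma cexp_congr {f f' : O → ℝ} {t : O → Prop} (h : ∀ o, t o → f o = f' o) :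
    cexp mu f t = cexp mu f' t := by
  rw [cexp_eq_sum_filter_div, cexp_eq_sum_filter_div,
    sum_congr rfl fun o ho => by rw [h o (mem_filter.1 ho).2]]

lemma expec_congr {f f' : O → ℝ} (h : ∀ o, f o = f' o) : expec mu f = expec mu f' := by
  simp only [expec, h]

lemma expec_add (f f' : O → ℝ) :
    expec mu (fun o => f o + f' o) = expec mu f + expec mu f' := by
  simp only [expec, add_mul, sum_add_distrib]

lemma expec_sub (f f' : O → ℝ) :
    expec mu (fun o => f o - f' o) = expec mu f - expec mu f' := by
  simp only [expec, sub_mul, sum_sub_distrib]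

lemma expec_eq_zero_of_fiberwise {β : Type} (hmu0 : ∀ o, 0 ≤ mu o) (V : O → β) {f : O → ℝ}
    (h : ∀ v, 0 < pr mu (fun o => V o = v) → ∑ o with V o = v, f o * mu o = 0) :
    expec mu f = 0 := by
  rw [expec, ← sum_fiberwise_of_maps_to (fun o _ => mem_image_of_mem V (mem_univ o))]
  refine sum_eq_zero fun v _ => ?_
  rcases (pr_nonneg hmu0 (fun o => V o = v)).eq_or_lt with hv | hv
  · exact sum_filter_mul_eq_zero_of_pr_eq_zero hmu0 hv.symm f
  · exact h v hv

lemma expec_mul_sub_eq_zero_of_cexp_eq {β : Type} (hmu0 : ∀ o, 0 ≤ mu o) (V : O → β)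
    (c : β → ℝ) {Y H : O → ℝ}
    (hYH : ∀ v, 0 < pr mu (fun o => V o = v) →
      cexp mu Y (fun o => V o = v) = cexp mu H (fun o => V o = v)) :
    expec mu (fun o => c (V o) * (Y o - H o)) = 0 := by
  refine expec_eq_zero_of_fiberwise hmu0 V fun v hv => ?_
  calc ∑ o with V o = v, c (V o) * (Y o - H o) * mu o
      = c v * (∑ o with V o = v, Y o * mu o - ∑ o with V o = v, H o * mu o) := by
        rw [← sum_sub_distrib, mul_sum]
        refine sum_congr rfl fun o ho => ?_
        rw [(mem_filter.1 ho).2]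
        ring
    _ = 0 := by rw [sum_filter_eq_of_cexp_eq hv.ne' (hYH v hv), sub_self, mul_zero]

lemma expec_mul_one_sub_ipw_eq_zero {α γ : Type} [DecidableEq α] (hmu0 : ∀ o, 0 ≤ mu o)
    (A : O → α) (X : O → γ) (a : α) (φ : γ → ℝ)
    (hpa : ∀ x, 0 < pr mu (fun o => X o = x) → 0 < pr mu (fun o => A o = a ∧ X o = x)) :
    expec mu (fun o => φ (X o) * (1 - (if A o = a then (1 : ℝ) else 0) /
      cpr mu (fun o' => A o' = a) (fun o' => X o' = X o))) = 0 := by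
  refine expec_eq_zero_of_fiberwise hmu0 X fun x hx => ?_
  have hpAX : ∑ o with X o = x, (if A o = a then mu o else 0) =
      pr mu (fun o => A o = a ∧ X o = x) := by
    rw [← sum_filter, filter_filter, pr_eq_sum_filter]
    congr 1
    ext o
    simp only [mem_filter, and_comm]
  calc ∑ o with X o = x, φ (X o) * (1 - (if A o = a then (1 : ℝ) else 0) /
        cpr mu (fun o' => A o' = a) (fun o' => X o' = X o)) * mu o
      = φ x * ∑ o with X o = x, mu o - φ x * pr mu (fun o => X o = x) /
          pr mu (fun o => A o = a ∧ X o = x) *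
          ∑ o with X o = x, (if A o = a then mu o else 0) := by
        rw [mul_sum, mul_sum, ← sum_sub_distrib]
        refine sum_congr rfl fun o ho => ?_
        rw [(mem_filter.1 ho).2, cpr, div_div_eq_mul_div]
        split_ifs <;> ring
    _ = 0 := by
        rw [hpAX, ← pr_eq_sum_filter, div_mul_cancel₀ _ (hpa x hx).ne', sub_self]

lemma expec_mul_sub_eq_zero_of_bridge {TA TZ TW TX : Type} (hmu0 : ∀ o, 0 ≤ mu o)
    (A : O → TA) (Y : O → ℝ) (Z : O → TZ) (W : O → TW) (X : O → TX)
    (hhat : TW → TA → TX → ℝ)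
    (hbridge : ∀ z t x, 0 < pr mu (fun o => Z o = z ∧ A o = t ∧ X o = x) →
      cexp mu Y (fun o => Z o = z ∧ A o = t ∧ X o = x) =
      cexp mu (fun o => hhat (W o) t x) (fun o => Z o = z ∧ A o = t ∧ X o = x))
    (c : TZ → TA → TX → ℝ) :
    expec mu (fun o => c (Z o) (A o) (X o) * (Y o - hhat (W o) (A o) (X o))) = 0 := by
  refine expec_mul_sub_eq_zero_of_cexp_eq hmu0 (fun o => (Z o, A o, X o))
    (fun v => c v.1 v.2.1 v.2.2) fun ⟨z, t, x⟩ hv => ?_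
  simp only [Prod.mk.injEq] at hv ⊢
  rw [hbridge z t x hv]
  exact cexp_congr fun o ⟨_, hA, hX⟩ => by rw [hA, hX]

end WeightedSums

theorem stmt12_general
    {O TA TZ TW TX : Type}
    [Fintype O] [Fintype TW]
    [DecidableEq TA]
    (mu : O -> Real) (hmu0 : forall o : O, 0 <= mu o)
    (A : O -> TA) (Y : O -> Real) (Z : O -> TZ) (W : O -> TW) (X : O -> TX)
    (a a' : TA) (hhat : TW -> TA -> TX -> Real)
    (hbridge : forall (z : TZ) (t : TA) (x : TX),
      0 < pr mu (fun o => Z o = z /\ A o = t /\ X o = x) ->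
      cexp mu Y (fun o => Z o = z /\ A o = t /\ X o = x) =
      cexp mu (fun o => hhat (W o) t x) (fun o => Z o = z /\ A o = t /\ X o = x))
    (qhat : TZ -> TA -> TX -> Real) (pwhat : TW -> TX -> Real)
    (hpa : forall x : TX, 0 < pr mu (fun o => X o = x) ->
      0 < pr mu (fun o => A o = a /\ X o = x)) :
    expec mu (fun o =>
      (if A o = a' then (1 : Real) else 0) /
          cpr mu (fun o' => A o' = a') (fun o' => X o' = X o) *
        qhat (Z o) (A o) (X o) * (Y o - hhat (W o) (A o) (X o)) +
      (if A o = a then (1 : Real) else 0) /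
          cpr mu (fun o' => A o' = a) (fun o' => X o' = X o) *
        (hhat (W o) a' (X o) -
          Finset.univ.sum (fun v : TW => hhat v a' (X o) * pwhat v (X o))) +
      Finset.univ.sum (fun v : TW => hhat v a' (X o) * pwhat v (X o))) =
    expec mu (fun o =>
      (if A o = a then (1 : Real) else 0) /
          cpr mu (fun o' => A o' = a) (fun o' => X o' = X o) *
        hhat (W o) a' (X o)) := by
  set eta : TX → ℝ := fun x => ∑ v : TW, hhat v a' x * pwhat v x
  have hresidual := expec_mul_sub_eq_zero_of_bridge hmu0 A Y Z W X hhat hbridge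
    fun z t x => (if t = a' then (1 : ℝ) else 0) /
      cpr mu (fun o' => A o' = a') (fun o' => X o' = x) * qhat z t x
  have hipw := expec_mul_one_sub_ipw_eq_zero hmu0 A X a eta hpa
  have hsum := congrArg₂ (· + ·) hresidual hipw
  rw [← expec_add, add_zero] at hsum
  exact sub_eq_zero.mp ((expec_sub _ _).symm.trans ((expec_congr fun o => by ring).trans hsum))

theorem stmt12
    {O TA TM TZ TW TX : Type}
    [Fintype O] [Fintype TA] [Fintype TM] [Fintype TZ] [Fintype TW] [Fintype TX]
    [DecidableEq TA] [DecidableEq TM] [DecidableEq TZ] [DecidableEq TW] [DecidableEq TX]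
    (mu : O -> Real) (hmu0 : forall o : O, 0 <= mu o)
    (hmu1 : Finset.univ.sum mu = 1)
    (A : O -> TA) (Y : O -> Real) (M : O -> TM) (Z : O -> TZ) (W : O -> TW) (X : O -> TX)
    (a a' : TA) (hhat : TW -> TA -> TX -> Real)
    (hbridge : forall (z : TZ) (t : TA) (x : TX),
      0 < pr mu (fun o => Z o = z /\ A o = t /\ X o = x) ->
      cexp mu Y (fun o => Z o = z /\ A o = t /\ X o = x) =
      cexp mu (fun o => hhat (W o) t x) (fun o => Z o = z /\ A o = t /\ X o = x))
    (qhat : TZ -> TA -> TX -> Real) (pwhat : TW -> TX -> Real)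
    (hpa : forall x : TX, 0 < pr mu (fun o => X o = x) ->
      0 < pr mu (fun o => A o = a /\ X o = x))
    (hpa' : forall x : TX, 0 < pr mu (fun o => X o = x) ->
      0 < pr mu (fun o => A o = a' /\ X o = x)) :
    expec mu (fun o =>
      (if A o = a' then (1 : Real) else 0) /
          cpr mu (fun o' => A o' = a') (fun o' => X o' = X o) *
        qhat (Z o) (A o) (X o) * (Y o - hhat (W o) (A o) (X o)) +
      (if A o = a then (1 : Real) else 0) /
          cpr mu (fun o' => A o' = a) (fun o' => X o' = X o) *
        (hhat (W o) a' (X o) -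
          Finset.univ.sum (fun v : TW => hhat v a' (X o) * pwhat v (X o))) +
      Finset.univ.sum (fun v : TW => hhat v a' (X o) * pwhat v (X o))) =
    expec mu (fun o =>
      (if A o = a then (1 : Real) else 0) /
          cpr mu (fun o' => A o' = a) (fun o' => X o' = X o) *
        hhat (W o) a' (X o)) :=
  stmt12_general mu hmu0 A Y Z W X a a' hhat hbridge qhat pwhat hpa
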